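/- arXiv:1907.06261 — 2 statements merged into one kernel-verified Lean document; each statement's English description precedes it below -/
import Mathlib

section
/- Let G be a connected algebraic group acting on an irreducible variety X over an uncountable field, and let v be a divisorial valuation on the function field of X. Suppose that for each rational function f there is a nonempty Zariski-open subset U_f of G such that v(γ·f) takes a common value \bar{v}(f) for all γ in U_f (Sumihiro approximation). If a sequence of divisorial valuations v_i converges pointwise to a G-invariant valuation v, then the associated G-invariant valuations \bar{v}_i also converge pointwise to v. In particular, the set of G-invariant divisorial valuations is dense in the space of G-invariant valuations with the topology of pointwise convergence. -/
/-- `K` stands for the nonzero rational functions on `X` and `𝒰` for the nonempty Zariski-open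
subsets of `G`; `hcap` is where the uncountability of the base field enters. -/
theorem sumihiro_density {K G : Type*} [Group G] [MulAction G K]
    (𝒰 : Set (Set G))
    (hcap : ∀ s : ℕ → Set G, (∀ i, s i ∈ 𝒰) → (⋂ i, s i).Nonempty)
    (v vbar : ℕ → K → ℝ) (w : K → ℝ)
    (U : ℕ → K → Set G)
    (hU : ∀ i f, U i f ∈ 𝒰)
    (hval : ∀ i f, ∀ γ ∈ U i f, v i (γ • f) = vbar i f)
    (hconv : ∀ f, Filter.Tendsto (fun i => v i f) Filter.atTop (nhds (w f)))
    (hGinv : ∀ (γ : G) (f : K), w (γ • f) = w f) :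
    ∀ f, Filter.Tendsto (fun i => vbar i f) Filter.atTop (nhds (w f)) := by
  intro f
  -- One translate `γ` realises `vbar i f = v i (γ • f)` for all `i` at once.
  obtain ⟨γ, hγ⟩ := hcap (fun i => U i f) (fun i => hU i f)
  have hγU : ∀ i, γ ∈ U i f := Set.mem_iInter.mp hγ
  rw [← hGinv γ f]
  exact (hconv (γ • f)).congr fun i => hval i f γ (hγU i)
end

section
/- Let X be a Fano variety of dimension n and G ⊂ Aut(X) a closed connected subgroup. If α_G(X) > n/(n+1) then δ_G(X) > 1, and if α_G(X) ≥ n/(n+1) then δ_G(X) ≥ 1. (Hence, via the valuative criterion, X is G-equivariantly uniformly K-stable, resp. K-semistable.) -/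
/-! Fujita's inequality `S ≤ (n/(n+1))·T` gives `A/T ≤ (n/(n+1))·(A/S)` for every valuation, and
taking infima yields `α_G ≤ (n/(n+1))·δ_G`; both implications follow by cancelling the factor
`n/(n+1) > 0`. -/

open Set

lemma div_le_mul_div_of_le_mul {a s t c : ℝ} (ha : 0 ≤ a) (hs : 0 < s) (ht : 0 < t)
    (hst : s ≤ c * t) : a / t ≤ c * (a / s) := by
  rw [div_le_iff₀ ht, ← mul_div_assoc, div_mul_eq_mul_div, le_div_iff₀ hs]
  nlinarith [mul_le_mul_of_nonneg_left hst ha]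

lemma Real.iInf_le_mul_iInf {ι : Sort*} {f g : ι → ℝ} {c : ℝ} (hc : 0 ≤ c)
    (hf : BddBelow (range f)) (hfg : ∀ i, f i ≤ c * g i) : ⨅ i, f i ≤ c * ⨅ i, g i := by
  rw [Real.mul_iInf_of_nonneg hc]
  exact ciInf_mono hf hfg

theorem alphaG_criterion_general {V : Type*} (n : ℕ) (hn : 0 < n)
    (A T S : V → ℝ)
    (hA : ∀ v, 0 < A v) (hT : ∀ v, 0 < T v) (hS : ∀ v, 0 < S v)
    (hFujita : ∀ v, S v ≤ ((n : ℝ) / (n + 1)) * T v) :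
    (((n : ℝ) / (n + 1) < ⨅ v, A v / T v) → 1 < ⨅ v, A v / S v) ∧
    (((n : ℝ) / (n + 1) ≤ ⨅ v, A v / T v) → 1 ≤ ⨅ v, A v / S v) := by
  have hc : (0 : ℝ) < n / (n + 1) := by positivity
  have hbdd : BddBelow (range fun v => A v / T v) :=
    ⟨0, by rintro _ ⟨v, rfl⟩; exact (div_pos (hA v) (hT v)).le⟩
  have hαδ : ⨅ v, A v / T v ≤ (n / (n + 1) : ℝ) * ⨅ v, A v / S v :=
    Real.iInf_le_mul_iInf hc.le hbdd fun v =>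
      div_le_mul_div_of_le_mul (hA v).le (hS v) (hT v) (hFujita v)
  refine ⟨fun hα => ?_, fun hα => ?_⟩
  · exact (lt_mul_iff_one_lt_right hc).mp (hα.trans_le hαδ)
  · exact (le_mul_iff_one_le_right hc).mp (hα.trans hαδ)

/-- Tian-type criterion: for a Fano variety `X` of dimension `n` with a closed
connected subgroup `G ⊂ Aut(X)`, let `V` be the (nonempty) set of `G`-invariant
divisorial valuations, `A` the log discrepancy, `T` and `S` the pseudoeffective
threshold and expected vanishing order for the anticanonical polarization, so
that `S v ≤ (n/(n+1))·T v` (Fujita's inequality, the only needed input).  With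
`α_G(X) = ⨅ A/T` and `δ_G(X) = ⨅ A/S`:
if `α_G(X) > n/(n+1)` then `δ_G(X) > 1`, and if `α_G(X) ≥ n/(n+1)` then
`δ_G(X) ≥ 1` (hence `X` is `G`-equivariantly uniformly K-stable, resp.
K-semistable, by the valuative criterion). -/
theorem alphaG_criterion {V : Type*} [Nonempty V] (n : ℕ) (hn : 0 < n)
    (A T S : V → ℝ)
    (hA : ∀ v, 0 < A v) (hT : ∀ v, 0 < T v) (hS : ∀ v, 0 < S v)
    (hFujita : ∀ v, S v ≤ ((n : ℝ) / (n + 1)) * T v) :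
    (((n : ℝ) / (n + 1) < ⨅ v, A v / T v) → 1 < ⨅ v, A v / S v) ∧
    (((n : ℝ) / (n + 1) ≤ ⨅ v, A v / T v) → 1 ≤ ⨅ v, A v / S v) :=
  alphaG_criterion_general n hn A T S hA hT hS hFujita
end
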